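/- arXiv:2509.13433 — 5 statements merged into one kernel-verified Lean document; each statement's English description precedes it below -/
import Mathlib

section
/- Let U ⊆ ℝⁿ be open and convex, (ψᵢ) a sequence of K-semiconcave functions on U converging uniformly to ψ, and (xᵢ) ⊆ U a sequence converging to x ∈ U. If pᵢ ∈ D⁺ψᵢ(xᵢ) and p is a limit point of (pᵢ), then p ∈ D⁺ψ(x). -/
open Filter Topology

/-- `f` is `K`-semiconcave on `U`. -/
def SemiconcaveWith {n : ℕ} (K : ℝ) (U : Set (EuclideanSpace ℝ (Fin n)))
    (f : EuclideanSpace ℝ (Fin n) → ℝ) : Prop :=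
  ∀ x ∈ U, ∀ y ∈ U, ∀ t ∈ Set.Icc (0 : ℝ) 1,
    (1 - t) * f x + t * f y - f ((1 - t) • x + t • y) ≤
      K * (t * (1 - t)) / 2 * ‖x - y‖ ^ 2

/-- `p ∈ D⁺f(x)`: the superdifferential of `f` at `x`, i.e.
`limsup_{y→x} (f(y) − f(x) − ⟨p, y−x⟩)/|y−x| ≤ 0`. -/
def SuperDiff {n : ℕ} (f : EuclideanSpace ℝ (Fin n) → ℝ)
    (x p : EuclideanSpace ℝ (Fin n)) : Prop :=
  ∀ ε > (0 : ℝ), ∃ δ > (0 : ℝ), ∀ y, ‖y - x‖ < δ →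
    f y - f x - (inner ℝ p (y - x) : ℝ) ≤ ε * ‖y - x‖

/-- Superdifferential + semiconcavity gives a global one-sided quadratic bound. -/
lemma lemA {n : ℕ} {U : Set (EuclideanSpace ℝ (Fin n))} {K : ℝ}
    {f : EuclideanSpace ℝ (Fin n) → ℝ} (hf : SemiconcaveWith K U f)
    {x p : EuclideanSpace ℝ (Fin n)} (hx : x ∈ U) (hsd : SuperDiff f x p) :
    ∀ y ∈ U, f y - f x - (inner ℝ p (y - x) : ℝ) ≤ K / 2 * ‖y - x‖ ^ 2 := by
  intro y hy
  rcases eq_or_ne y x with rfl | hne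
  · simp
  have hN : (0:ℝ) < ‖y - x‖ := norm_sub_pos_iff.mpr hne
  set N := ‖y - x‖ with hNdef
  apply le_of_forall_pos_le_add
  intro η hη
  have hεpos : (0:ℝ) < η / (2 * N) := by positivity
  obtain ⟨δ, hδ, hδ2⟩ := hsd (η / (2 * N)) hεpos
  set t : ℝ := min 1 (min (δ / (2 * N)) (η / (|K| * N ^ 2 + 1))) with ht
  have ht0 : 0 < t := by
    apply lt_min (by norm_num)
    exact lt_min (by positivity) (by positivity)
  have ht1 : t ≤ 1 := min_le_left _ _
  have htδ : t ≤ δ / (2 * N) := le_trans (min_le_right _ _) (min_le_left _ _)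
  have htη : t ≤ η / (|K| * N ^ 2 + 1) := le_trans (min_le_right _ _) (min_le_right _ _)
  set z := (1 - t) • x + t • y with hz
  have hzx : z - x = t • (y - x) := by rw [hz]; module
  have hzn : ‖z - x‖ = t * N := by
    rw [hzx, norm_smul, Real.norm_eq_abs, abs_of_pos ht0]
  have hzδ : ‖z - x‖ < δ := by
    rw [hzn]
    calc t * N ≤ (δ / (2 * N)) * N := by nlinarith
    _ = δ / 2 := by field_simp
    _ < δ := by linarith
  have hsup := hδ2 z hzδ
  have hinner : (inner ℝ p (z - x) : ℝ) = t * (inner ℝ p (y - x) : ℝ) := by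
    rw [hzx, real_inner_smul_right]
  have hsemi := hf x hx y hy t ⟨ht0.le, ht1⟩
  rw [norm_sub_rev x y] at hsemi
  rw [hinner, hzn] at hsup
  have hcomb : t * (f y - f x - (inner ℝ p (y - x) : ℝ)) ≤
      K * (t * (1 - t)) / 2 * N ^ 2 + η / (2 * N) * (t * N) := by
    nlinarith [hsup, hsemi]
  have hεN : η / (2 * N) * (t * N) = t * (η / 2) := by field_simp
  rw [hεN] at hcomb
  have hdiv : f y - f x - (inner ℝ p (y - x) : ℝ) ≤
      K * (1 - t) / 2 * N ^ 2 + η / 2 :=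
    (mul_le_mul_iff_right₀ ht0).mp (by nlinarith [hcomb])
  have h1 : t * (|K| * N ^ 2 + 1) ≤ η := (le_div_iff₀ (by positivity)).mp htη
  have h3 : -K * (t * N ^ 2) ≤ |K| * (t * N ^ 2) :=
    mul_le_mul_of_nonneg_right (neg_le_abs K) (by positivity)
  nlinarith [ht0]

/-- stability of superdifferentials under uniform convergence of
`K`-semiconcave functions. -/
theorem stmt1 {n : ℕ} {U : Set (EuclideanSpace ℝ (Fin n))}
    (hUopen : IsOpen U) (hUconv : Convex ℝ U) {K : ℝ}
    (ψ : ℕ → EuclideanSpace ℝ (Fin n) → ℝ) (ψlim : EuclideanSpace ℝ (Fin n) → ℝ)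
    (hsc : ∀ i, SemiconcaveWith K U (ψ i))
    (hunif : TendstoUniformlyOn ψ ψlim Filter.atTop U)
    (x : EuclideanSpace ℝ (Fin n)) (hx : x ∈ U)
    (xs : ℕ → EuclideanSpace ℝ (Fin n)) (hxs : ∀ i, xs i ∈ U)
    (hxlim : Tendsto xs atTop (𝓝 x))
    (ps : ℕ → EuclideanSpace ℝ (Fin n)) (hps : ∀ i, SuperDiff (ψ i) (xs i) (ps i))
    (p : EuclideanSpace ℝ (Fin n)) (hp : MapClusterPt p atTop ps) :
    SuperDiff ψlim x p := by
  -- each ψ i is continuous on U since ψ i - K/2‖·‖² is concave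
  have hcont : ∀ i, ContinuousOn (ψ i) U := by
    intro i
    have hconc : ConcaveOn ℝ U (fun z => ψ i z - K / 2 * ‖z‖ ^ 2) := by
      refine ⟨hUconv, fun a ha b hb s u hs hu hsu => ?_⟩
      have h1 := hsc i a ha b hb u ⟨hu, by linarith⟩
      have hs1 : (1 : ℝ) - u = s := by linarith
      rw [hs1] at h1
      have hnorm : s * ‖a‖ ^ 2 + u * ‖b‖ ^ 2 - ‖s • a + u • b‖ ^ 2
          = (u * s) * ‖a - b‖ ^ 2 := by
        have e1 : ‖s • a + u • b‖ ^ 2 =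
            s ^ 2 * ‖a‖ ^ 2 + 2 * (s * u) * (inner ℝ a b : ℝ) + u ^ 2 * ‖b‖ ^ 2 := by
          rw [norm_add_sq_real, norm_smul, norm_smul, real_inner_smul_left,
            real_inner_smul_right, Real.norm_eq_abs, Real.norm_eq_abs,
            abs_of_nonneg hs, abs_of_nonneg hu]
          ring
        have e2 : ‖a - b‖ ^ 2 = ‖a‖ ^ 2 - 2 * (inner ℝ a b : ℝ) + ‖b‖ ^ 2 := by
          rw [norm_sub_sq_real]
        rw [e1, e2]; linear_combination (-(s * ‖a‖ ^ 2) - u * ‖b‖ ^ 2) * hsu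
      have h2 : K / 2 * (s * ‖a‖ ^ 2 + u * ‖b‖ ^ 2 - ‖s • a + u • b‖ ^ 2)
          = K * (u * s) / 2 * ‖a - b‖ ^ 2 := by rw [hnorm]; ring
      simp only [smul_eq_mul]
      linarith [h1, h2]
    have : ContinuousOn (fun z => (ψ i z - K / 2 * ‖z‖ ^ 2) + K / 2 * ‖z‖ ^ 2) U :=
      (hconc.continuousOn hUopen).add ((continuousOn_const.mul
        ((continuous_norm.pow 2).continuousOn)))
    simpa using this
  have hlimcont : ContinuousOn ψlim U :=
    hunif.continuousOn (Filter.Eventually.of_forall hcont).frequently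
  -- the cluster filter
  set F : Filter ℕ := atTop ⊓ comap ps (𝓝 p) with hF
  have hFne : F.NeBot := by
    rw [hF, ← Filter.map_neBot_iff ps, Filter.push_pull]
    exact (inf_comm (𝓝 p) (map ps atTop) ▸ hp : (map ps atTop ⊓ 𝓝 p).NeBot)
  have tend_ps : Tendsto ps F (𝓝 p) := tendsto_comap.mono_left inf_le_right
  have tend_xs : Tendsto xs F (𝓝 x) := hxlim.mono_left inf_le_left
  -- ψ i (xs i) → ψlim x
  have h0 : Tendsto (fun i => ψ i (xs i) - ψlim (xs i)) atTop (𝓝 0) := by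
    rw [Metric.tendsto_nhds]
    intro ε hε
    filter_upwards [Metric.tendstoUniformlyOn_iff.mp hunif ε hε] with i hi
    have := hi (xs i) (hxs i)
    rw [Real.dist_eq] at this ⊢
    rw [sub_zero, abs_sub_comm]
    exact this
  have hψx : Tendsto (fun i => ψ i (xs i)) F (𝓝 (ψlim x)) := by
    have h1 : Tendsto (fun i => ψlim (xs i)) F (𝓝 (ψlim x)) :=
      ((hlimcont.continuousAt (hUopen.mem_nhds hx)).tendsto).comp tend_xs
    have h2 := (h0.mono_left (inf_le_left : F ≤ atTop)).add h1
    simpa using h2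
  have key : ∀ y ∈ U, ψlim y - ψlim x - (inner ℝ p (y - x) : ℝ) ≤ K / 2 * ‖y - x‖ ^ 2 := by
    intro y hy
    have tend_y : Tendsto (fun i => ψ i y) F (𝓝 (ψlim y)) :=
      (hunif.tendsto_at hy).mono_left inf_le_left
    have tend_inner : Tendsto (fun i => (inner ℝ (ps i) (y - xs i) : ℝ)) F
        (𝓝 (inner ℝ p (y - x) : ℝ)) :=
      tend_ps.inner (tendsto_const_nhds.sub tend_xs)
    have tend_lhs : Tendsto (fun i => ψ i y - ψ i (xs i) - (inner ℝ (ps i) (y - xs i) : ℝ)) F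
        (𝓝 (ψlim y - ψlim x - (inner ℝ p (y - x) : ℝ))) :=
      (tend_y.sub hψx).sub tend_inner
    have tend_rhs : Tendsto (fun i => K / 2 * ‖y - xs i‖ ^ 2) F (𝓝 (K / 2 * ‖y - x‖ ^ 2)) :=
      tendsto_const_nhds.mul (((tendsto_const_nhds.sub tend_xs).norm).pow 2)
    exact le_of_tendsto_of_tendsto' tend_lhs tend_rhs
      (fun i => lemA (hsc i) (hxs i) (hps i) y hy)
  -- conclude
  intro ε hε
  obtain ⟨r, hr, hball⟩ := Metric.isOpen_iff.mp hUopen x hx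
  refine ⟨min r (2 * ε / (|K| + 1)), lt_min hr (by positivity), fun y hylt => ?_⟩
  have hyU : y ∈ U := hball (by
    rw [Metric.mem_ball, dist_eq_norm]
    exact hylt.trans_le (min_le_left _ _))
  have hN2 : ‖y - x‖ * (|K| + 1) < 2 * ε := by
    have : ‖y - x‖ < 2 * ε / (|K| + 1) := hylt.trans_le (min_le_right _ _)
    rwa [lt_div_iff₀ (by positivity)] at this
  have := key y hyU
  nlinarith [norm_nonneg (y - x), le_abs_self K, abs_nonneg K]
end

section
/- Let f : U → ℝ be semiconcave on an open set U ⊆ ℝⁿ and fix x₀ ∈ U, p₀ ∈ D⁺f(x₀). Then there exists a sequence of mollifications fᵐ = ηᵐ * f (with mollifiers ηᵐ ≥ 0, supp ηᵐ ⊆ B(0,1/m), ∫ηᵐ = 1) such that fᵐ → f uniformly on compact subsets of U and Dfᵐ(x₀) → p₀. -/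
open Filter Topology MeasureTheory Metric Function
open scoped RealInnerProductSpace


open Filter Topology MeasureTheory

/-- `f` is locally semiconcave on the open set `U`. -/
def LocallySemiconcaveOn {n : ℕ} (U : Set (EuclideanSpace ℝ (Fin n)))
    (f : EuclideanSpace ℝ (Fin n) → ℝ) : Prop :=
  ∀ x ∈ U, ∃ V : Set (EuclideanSpace ℝ (Fin n)),
    x ∈ V ∧ IsOpen V ∧ V ⊆ U ∧ Convex ℝ V ∧ ∃ K : ℝ, SemiconcaveWith K V f

variable {n : ℕ}

lemma norm_combo_sq (x y : EuclideanSpace ℝ (Fin n)) {a b : ℝ} (hab : a + b = 1) :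
    ‖a • x + b • y‖ ^ 2 = a * ‖x‖ ^ 2 + b * ‖y‖ ^ 2 - a * b * ‖x - y‖ ^ 2 := by
  have hb : b = 1 - a := by linarith
  subst hb
  rw [← real_inner_self_eq_norm_sq, ← real_inner_self_eq_norm_sq, ← real_inner_self_eq_norm_sq,
    ← real_inner_self_eq_norm_sq]
  have hyx : ⟪y, x⟫ = ⟪x, y⟫ := real_inner_comm x y
  simp only [inner_add_left, inner_add_right, inner_sub_left, inner_sub_right,
    real_inner_smul_left, real_inner_smul_right, hyx]
  ring

lemma semiconcave_convexOn {K : ℝ} {V : Set (EuclideanSpace ℝ (Fin n))}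
    {f : EuclideanSpace ℝ (Fin n) → ℝ} (hV : Convex ℝ V) (hK : SemiconcaveWith K V f) :
    ConvexOn ℝ V (fun x => K / 2 * ‖x‖ ^ 2 - f x) := by
  refine ⟨hV, fun x hx y hy a b ha hb hab => ?_⟩
  have hsc := hK x hx y hy b ⟨hb, by linarith⟩
  have h1 : (1 : ℝ) - b = a := by linarith
  rw [h1] at hsc
  have h2 := norm_combo_sq x y hab
  simp only [smul_eq_mul]
  rw [h2]
  linarith [hsc]

lemma locallySemiconcave_continuousOn {U : Set (EuclideanSpace ℝ (Fin n))}
    {f : EuclideanSpace ℝ (Fin n) → ℝ} (hUopen : IsOpen U) (hf : LocallySemiconcaveOn U f) :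
    ContinuousOn f U := by
  intro x hx
  obtain ⟨V, hxV, hVopen, hVU, hVconv, K, hK⟩ := hf x hx
  have hg := (semiconcave_convexOn hVconv hK).continuousOn hVopen
  have hgx : ContinuousAt (fun y => K / 2 * ‖y‖ ^ 2 - f y) x :=
    hg.continuousAt (hVopen.mem_nhds hxV)
  have hq : Continuous fun y : EuclideanSpace ℝ (Fin n) => K / 2 * ‖y‖ ^ 2 := by fun_prop
  have hfx : ContinuousAt f x := by
    have h3 := (hq.continuousAt (x := x)).sub hgx
    exact h3.congr (Filter.Eventually.of_forall fun y => by simp)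
  exact hfx.continuousWithinAt

set_option maxHeartbeats 1000000 in
lemma superdiff_global {K : ℝ} {V : Set (EuclideanSpace ℝ (Fin n))}
    {f : EuclideanSpace ℝ (Fin n) → ℝ} (hVconv : Convex ℝ V) (hK : SemiconcaveWith K V f)
    {x₀ p₀ : EuclideanSpace ℝ (Fin n)} (hx₀ : x₀ ∈ V) (hp₀ : SuperDiff f x₀ p₀) :
    ∀ y ∈ V, f y - f x₀ - ⟪p₀, y - x₀⟫ ≤ K / 2 * ‖y - x₀‖ ^ 2 := by
  have hg := semiconcave_convexOn hVconv hK
  intro y hy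
  rcases eq_or_ne y x₀ with rfl | hne
  · simp
  have hvpos : 0 < ‖y - x₀‖ := by rw [norm_pos_iff, sub_ne_zero]; exact hne
  have main : K * ⟪x₀, y - x₀⟫ - ⟪p₀, y - x₀⟫ ≤
      (K / 2 * ‖y‖ ^ 2 - f y) - (K / 2 * ‖x₀‖ ^ 2 - f x₀) := by
    apply le_of_forall_pos_le_add
    intro ε hε
    obtain ⟨δ, hδ, hsd⟩ := hp₀ (ε / (2 * (‖y - x₀‖ + 1))) (by positivity)
    set t := min 1 (min (δ / (‖y - x₀‖ + 1)) (ε / (|K| * ‖y - x₀‖ ^ 2 + 1))) with ht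
    have ht0 : 0 < t := lt_min zero_lt_one (lt_min (by positivity) (by positivity))
    have ht1 : t ≤ 1 := min_le_left _ _
    have htδ : t ≤ δ / (‖y - x₀‖ + 1) := le_trans (min_le_right _ _) (min_le_left _ _)
    have htε : t ≤ ε / (|K| * ‖y - x₀‖ ^ 2 + 1) := le_trans (min_le_right _ _) (min_le_right _ _)
    have htL : t * ‖y - x₀‖ < δ := by
      have h1 : t * ‖y - x₀‖ ≤ δ / (‖y - x₀‖ + 1) * ‖y - x₀‖ :=
        mul_le_mul_of_nonneg_right htδ (norm_nonneg _)
      have h2 : δ / (‖y - x₀‖ + 1) * ‖y - x₀‖ < δ := by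
        rw [div_mul_eq_mul_div, div_lt_iff₀ (by positivity)]
        nlinarith
      linarith
    set z := x₀ + t • (y - x₀) with hz
    have hz1 : z - x₀ = t • (y - x₀) := by rw [hz]; abel
    have hcvx := hg.2 hx₀ hy (by linarith : (0:ℝ) ≤ 1 - t) ht0.le (by ring)
    have heq : (1 - t) • x₀ + t • y = z := by rw [hz]; module
    rw [heq] at hcvx
    simp only [smul_eq_mul] at hcvx
    have hsd' := hsd z (by rw [hz1, norm_smul, Real.norm_eq_abs, abs_of_pos ht0]; exact htL)
    rw [hz1, real_inner_smul_right, norm_smul, Real.norm_eq_abs, abs_of_pos ht0] at hsd'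
    have hnz : ‖z‖ ^ 2 = ‖x₀‖ ^ 2 + 2 * (t * ⟪x₀, y - x₀⟫) + (t * ‖y - x₀‖) ^ 2 := by
      rw [hz, norm_add_sq_real, real_inner_smul_right, norm_smul, Real.norm_eq_abs,
        abs_of_pos ht0]
    have hKt : |K / 2 * (t * ‖y - x₀‖ ^ 2)| ≤ ε / 2 := by
      rw [abs_mul, abs_of_pos (by positivity : (0:ℝ) < t * ‖y - x₀‖ ^ 2)]
      have h5 : |K / 2| ≤ (|K| * ‖y - x₀‖ ^ 2 + 1) / (2 * ‖y - x₀‖ ^ 2) := by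
        rw [abs_div, abs_two, div_le_div_iff₀ (by positivity) (by positivity)]
        nlinarith [abs_nonneg K]
      have h6 : t * ‖y - x₀‖ ^ 2 ≤ ε / (|K| * ‖y - x₀‖ ^ 2 + 1) * ‖y - x₀‖ ^ 2 :=
        mul_le_mul_of_nonneg_right htε (by positivity)
      calc |K / 2| * (t * ‖y - x₀‖ ^ 2)
          ≤ (|K| * ‖y - x₀‖ ^ 2 + 1) / (2 * ‖y - x₀‖ ^ 2)
            * (ε / (|K| * ‖y - x₀‖ ^ 2 + 1) * ‖y - x₀‖ ^ 2) := by
            apply mul_le_mul h5 h6 (by positivity) (by positivity)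
        _ = ε / 2 := by field_simp
    have hεL : ε / (2 * (‖y - x₀‖ + 1)) * (t * ‖y - x₀‖) ≤ t * (ε / 2) := by
      rw [div_mul_eq_mul_div, div_le_iff₀ (by positivity)]
      nlinarith
    have habs := abs_le.1 hKt
    have e1 : K / 2 * ‖z‖ ^ 2 = K / 2 * ‖x₀‖ ^ 2 + K * (t * ⟪x₀, y - x₀⟫)
        + K / 2 * (t * ‖y - x₀‖) ^ 2 := by rw [hnz]; ring
    have e2 : K / 2 * (t * ‖y - x₀‖) ^ 2 = t * (K / 2 * (t * ‖y - x₀‖ ^ 2)) := by ring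
    have e4 : t * (-(ε / 2)) ≤ t * (K / 2 * (t * ‖y - x₀‖ ^ 2)) :=
      mul_le_mul_of_nonneg_left habs.1 ht0.le
    have e5 : f z - f x₀ ≤ t * ⟪p₀, y - x₀⟫ + t * (ε / 2) := by linarith [hsd', hεL]
    have hdiv : t * (K * ⟪x₀, y - x₀⟫ - ⟪p₀, y - x₀⟫) ≤
        t * ((K / 2 * ‖y‖ ^ 2 - f y) - (K / 2 * ‖x₀‖ ^ 2 - f x₀) + ε) := by
      linarith [hcvx, e1, e2, e4, e5]
    have hfin := (mul_le_mul_iff_right₀ ht0).1 hdiv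
    linarith
  have hy2 : ‖y‖ ^ 2 = ‖x₀‖ ^ 2 + 2 * ⟪x₀, y - x₀⟫ + ‖y - x₀‖ ^ 2 := by
    have h7 : y = x₀ + (y - x₀) := by abel
    calc ‖y‖ ^ 2 = ‖x₀ + (y - x₀)‖ ^ 2 := by rw [← h7]
      _ = _ := by rw [norm_add_sq_real]
  have e6 : K / 2 * ‖y‖ ^ 2 = K / 2 * ‖x₀‖ ^ 2 + K * ⟪x₀, y - x₀⟫
      + K / 2 * ‖y - x₀‖ ^ 2 := by rw [hy2]; ring
  linarith [main, e6]

lemma hasGradientAt_aux (p₀ x₀ z : EuclideanSpace ℝ (Fin n)) (σ : ℝ) :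
    HasGradientAt (fun x => ⟪p₀, x - x₀⟫ + σ * ‖x - x₀‖ ^ 2)
      (p₀ + (2 * σ) • (z - x₀)) z := by
  rw [hasGradientAt_iff_isLittleO]
  have hid : ∀ x : EuclideanSpace ℝ (Fin n),
      (⟪p₀, x - x₀⟫ + σ * ‖x - x₀‖ ^ 2) - (⟪p₀, z - x₀⟫ + σ * ‖z - x₀‖ ^ 2)
        - ⟪p₀ + (2 * σ) • (z - x₀), x - z⟫ = σ * ‖x - z‖ ^ 2 := by
    intro x
    have h1 : x - x₀ = (x - z) + (z - x₀) := by abel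
    rw [h1, norm_add_sq_real, inner_add_right, inner_add_left, real_inner_smul_left,
      real_inner_comm (x - z) (z - x₀)]
    ring
  have heq : (fun x : EuclideanSpace ℝ (Fin n) =>
      (⟪p₀, x - x₀⟫ + σ * ‖x - x₀‖ ^ 2) - (⟪p₀, z - x₀⟫ + σ * ‖z - x₀‖ ^ 2)
        - ⟪p₀ + (2 * σ) • (z - x₀), x - z⟫)
      = fun x => σ * ‖x - z‖ ^ 2 := funext hid
  rw [heq]
  rw [Asymptotics.isLittleO_iff]
  intro c hc
  have hpos : 0 < c / (|σ| + 1) := by positivity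
  filter_upwards [Metric.ball_mem_nhds z hpos] with x hx
  rw [mem_ball, dist_eq_norm] at hx
  have h2 : ‖x - z‖ * (|σ| + 1) < c := (lt_div_iff₀ (by positivity)).1 hx
  have h3 : ‖σ * ‖x - z‖ ^ 2‖ = |σ| * ‖x - z‖ ^ 2 := by
    rw [Real.norm_eq_abs, abs_mul, abs_of_nonneg (by positivity : (0:ℝ) ≤ ‖x - z‖ ^ 2)]
  rw [h3]
  nlinarith [norm_nonneg (x - z), abs_nonneg σ]

set_option maxHeartbeats 1000000 in
lemma key_lemma {f ft : EuclideanSpace ℝ (Fin n) → ℝ} {x₀ p₀ : EuclideanSpace ℝ (Fin n)}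
    {K σ r₀ : ℝ} (hr₀ : 0 < r₀) (hσK : K / 2 + 1 ≤ σ) (hσ : 0 < σ)
    (hftc : Continuous ft) (hftcs : HasCompactSupport ft)
    (hfteq : ∀ x ∈ closedBall x₀ (2 * r₀), ft x = f x)
    (hstar : ∀ y ∈ closedBall x₀ (3 * r₀),
      f y - f x₀ - ⟪p₀, y - x₀⟫ ≤ K / 2 * ‖y - x₀‖ ^ 2)
    (m : ℕ) :
    ∃ (η : EuclideanSpace ℝ (Fin n) → ℝ) (v : EuclideanSpace ℝ (Fin n)),
      Continuous η ∧ (∀ y, 0 ≤ η y) ∧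
      Function.support η ⊆ ball 0 (1 / (m + 1 : ℝ)) ∧
      (∫ y, η y) = 1 ∧
      HasGradientAt (fun x => ∫ y, η y * f (x - y)) v x₀ ∧
      ‖v - p₀‖ ≤ σ / (m + 1 : ℝ) := by
  have hftuc : UniformContinuous ft := hftcs.uniformContinuous_of_continuous hftc
  have hm1 : (0:ℝ) < (m + 1 : ℝ) := by positivity
  set δ := min (r₀ / 2) (1 / (2 * (m + 1 : ℝ))) with hδdef
  have hδ : 0 < δ := lt_min (by positivity) (by positivity)
  have hδr₀ : δ ≤ r₀ / 2 := min_le_left _ _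
  have hδm : δ ≤ 1 / (2 * (m + 1 : ℝ)) := min_le_right _ _
  obtain ⟨δ', hδ', huc⟩ := Metric.uniformContinuous_iff.1 hftuc (δ ^ 2 / 4) (by positivity)
  set r := min (δ' / 2) δ with hrdef
  have hr : 0 < r := lt_min (by positivity) hδ
  have hrδ' : r < δ' := lt_of_le_of_lt (min_le_left _ _) (by linarith)
  have hrδ : r ≤ δ := min_le_right _ _
  set ρ : ContDiffBump (0 : EuclideanSpace ℝ (Fin n)) := ⟨r/2, r, by positivity, by linarith⟩
    with hρdef
  set N := ρ.normed volume with hNdef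
  have hNc : Continuous N := ρ.continuous_normed
  have hNnn : ∀ y, 0 ≤ N y := fun y => ρ.nonneg_normed y
  have hNint : ∫ y, N y = 1 := ρ.integral_normed
  have hNsupp : Function.support N = ball 0 r := ρ.support_normed_eq
  have hNI : Integrable N := ρ.integrable_normed
  have hNcs : HasCompactSupport N := ρ.hasCompactSupport_normed
  -- the smooth mollification of ft
  set G := fun x => ∫ t, N t * ft (x - t) with hGdef
  have hIx : ∀ x : EuclideanSpace ℝ (Fin n), Integrable (fun t => N t * ft (x - t)) :=
    fun x => ((hNc.mul (hftc.comp (continuous_const.sub continuous_id))).integrable_of_hasCompactSupport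
        hNcs.mul_right)
  have hGconv : G = convolution N ft (ContinuousLinearMap.mul ℝ ℝ) volume := by
    funext x
    rw [convolution_def]
    simp only [ContinuousLinearMap.mul_apply']
    rfl
  have hGdiff : ∀ x, DifferentiableAt ℝ G x := by
    intro x
    have h := HasCompactSupport.hasFDerivAt_convolution_left (ContinuousLinearMap.mul ℝ ℝ)
      hNcs (ρ.contDiff_normed (n := 1)) (hftc.locallyIntegrable (μ := volume)) x
    rw [← hGconv] at h
    exact h.differentiableAt
  have hGc : Continuous G := continuous_iff_continuousAt.2 fun x => (hGdiff x).continuousAt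
  -- error bound
  have herr : ∀ x, |G x - ft x| ≤ δ ^ 2 / 4 := by
    intro x
    have h2 : (∫ t, N t * ft x) = ft x := by
      rw [integral_mul_const, hNint, one_mul]
    have hdiffI : Integrable (fun t => N t * (ft (x - t) - ft x)) := by
      have := (hIx x).sub (hNI.mul_const (ft x))
      simp only [mul_sub]
      exact this
    have h3 : (∫ t, N t * (ft (x - t) - ft x)) = G x - ft x := by
      rw [show (fun t => N t * (ft (x - t) - ft x))
          = fun t => N t * ft (x - t) - N t * ft x from funext fun t => by ring,
        integral_sub (hIx x) (hNI.mul_const _), h2]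
    rw [← h3]
    have h4 : ∀ t, |N t * (ft (x - t) - ft x)| ≤ N t * (δ ^ 2 / 4) := by
      intro t
      rcases eq_or_ne (N t) 0 with h | h
      · simp [h]
      · have ht : t ∈ ball (0 : EuclideanSpace ℝ (Fin n)) r := by
          rw [← hNsupp]; exact Function.mem_support.2 h
        rw [mem_ball, dist_zero_right] at ht
        have hd : dist (x - t) x < δ' := by
          rw [dist_eq_norm]
          simpa using lt_trans ht hrδ'
        have h5 : |ft (x - t) - ft x| ≤ δ ^ 2 / 4 := by
          rw [← Real.dist_eq]
          exact (huc hd).le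
        rw [abs_mul, abs_of_nonneg (hNnn t)]
        exact mul_le_mul_of_nonneg_left h5 (hNnn t)
    calc |∫ t, N t * (ft (x - t) - ft x)| ≤ ∫ t, |N t * (ft (x - t) - ft x)| := by
          simpa only [Real.norm_eq_abs] using
            norm_integral_le_integral_norm (μ := volume) (fun t => N t * (ft (x - t) - ft x))
      _ ≤ ∫ t, N t * (δ ^ 2 / 4) :=
          integral_mono hdiffI.abs (hNI.mul_const _) h4
      _ = δ ^ 2 / 4 := by rw [integral_mul_const, hNint, one_mul]
  -- the perturbed function and its max
  set ψ := fun x => ⟪p₀, x - x₀⟫ + σ * ‖x - x₀‖ ^ 2 with hψdef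
  have hψc : Continuous ψ := by
    apply Continuous.add
    · exact (continuous_const.inner (continuous_id.sub continuous_const))
    · exact continuous_const.mul (((continuous_id.sub continuous_const).norm).pow 2)
  set φ := fun x => G x - ψ x with hφdef
  have hφc : ContinuousOn φ (closedBall x₀ δ) := (hGc.sub hψc).continuousOn
  obtain ⟨xm, hxmcb, hxmmax⟩ := (isCompact_closedBall x₀ δ).exists_isMaxOn
    ⟨x₀, mem_closedBall_self hδ.le⟩ hφc
  have hxmnorm : ‖xm - x₀‖ ≤ δ := by rwa [← dist_eq_norm, ← mem_closedBall]
  have hψx₀ : ψ x₀ = 0 := by simp [hψdef]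
  have hlt : ‖xm - x₀‖ < δ := by
    rcases lt_or_eq_of_le hxmnorm with h | heq
    · exact h
    -- boundary case: contradiction
    exfalso
    have h6 : φ x₀ ≤ φ xm := hxmmax (mem_closedBall_self hδ.le)
    simp only [hφdef] at h6
    rw [hψx₀] at h6
    have hψxm : ψ xm = ⟪p₀, xm - x₀⟫ + σ * δ ^ 2 := by
      rw [hψdef]
      simp only
      rw [heq]
    rw [hψxm] at h6
    have e1 := herr x₀
    have e2 := herr xm
    rw [hfteq x₀ (mem_closedBall_self (by positivity))] at e1
    rw [hfteq xm (by rw [mem_closedBall, dist_eq_norm, heq]; linarith)] at e2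
    have hxmV : xm ∈ closedBall x₀ (3 * r₀) := by
      rw [mem_closedBall, dist_eq_norm, heq]; linarith
    have hs := hstar xm hxmV
    rw [heq] at hs
    have habs1 := abs_le.1 e1
    have habs2 := abs_le.1 e2
    have hδ2 : 0 < δ ^ 2 := by positivity
    nlinarith [h6, habs1.1, habs1.2, habs2.1, habs2.2, hs, hσK, hδ2,
      mul_le_mul_of_nonneg_right hσK hδ2.le]
  -- interior maximum: gradient identification
  have hxmball : xm ∈ ball x₀ δ := by rwa [mem_ball, dist_eq_norm]
  have hloc : IsLocalMax φ xm := hxmmax.isLocalMax (closedBall_mem_nhds_of_mem hxmball)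
  have hψg : HasGradientAt ψ (p₀ + (2 * σ) • (xm - x₀)) xm := hasGradientAt_aux p₀ x₀ xm σ
  set w := p₀ + (2 * σ) • (xm - x₀) with hwdef
  have hφd : HasFDerivAt φ (fderiv ℝ G xm - InnerProductSpace.toDual ℝ _ w) xm :=
    ((hGdiff xm).hasFDerivAt).sub hψg.hasFDerivAt
  have h0 : fderiv ℝ φ xm = 0 := hloc.fderiv_eq_zero
  have hGfd : fderiv ℝ G xm = InnerProductSpace.toDual ℝ _ w := by
    have h8 := hφd.fderiv
    rw [h0] at h8
    have := sub_eq_zero.1 h8.symm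
    exact this
  have hGg : HasGradientAt G w xm := by
    have h9 := (hGdiff xm).hasFDerivAt
    rw [hGfd] at h9
    simpa using hasFDerivAt_iff_hasGradientAt.1 h9
  -- translation
  set c := x₀ - xm with hcdef
  have hxc : x₀ - c = xm := by rw [hcdef]; abel
  have hGt : HasGradientAt (fun x => G (x - c)) w x₀ := by
    have h1 : HasFDerivAt (fun x : EuclideanSpace ℝ (Fin n) => x - c)
        (ContinuousLinearMap.id ℝ _) x₀ := (hasFDerivAt_id x₀).sub_const c
    have h2 := hGg.hasFDerivAt
    rw [← hxc] at h2
    have h3 := h2.comp x₀ h1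
    rw [ContinuousLinearMap.comp_id] at h3
    have h4 : ((fun y => G y) ∘ fun x => x - c) = fun x => G (x - c) := rfl
    rw [h4] at h3
    simpa using hasFDerivAt_iff_hasGradientAt.1 h3
  -- the shifted mollifier
  set η := fun y => N (y - c) with hηdef
  have hηc : Continuous η := hNc.comp (continuous_id.sub continuous_const)
  have hηnn : ∀ y, 0 ≤ η y := fun y => hNnn _
  have hcnorm : ‖c‖ < δ := by rw [hcdef, norm_sub_rev]; exact hlt
  have h2δ : 2 * δ ≤ 1 / (m + 1 : ℝ) := by
    have h1 : 2 * δ ≤ 2 * (1 / (2 * (m + 1 : ℝ))) := by linarith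
    have h2 : 2 * (1 / (2 * (m + 1 : ℝ))) = 1 / (m + 1 : ℝ) := by
      field_simp
    linarith
  have hηsupp : Function.support η ⊆ ball 0 (1 / (m + 1 : ℝ)) := by
    intro y hy
    have h1 : y - c ∈ Function.support N := Function.mem_support.2 (by simpa [hηdef] using hy)
    rw [hNsupp, mem_ball, dist_zero_right] at h1
    rw [mem_ball, dist_zero_right]
    have h2 : ‖y‖ ≤ ‖y - c‖ + ‖c‖ := by
      calc ‖y‖ = ‖(y - c) + c‖ := by rw [sub_add_cancel]
        _ ≤ ‖y - c‖ + ‖c‖ := norm_add_le _ _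
    calc ‖y‖ ≤ ‖y - c‖ + ‖c‖ := h2
      _ < r + δ := add_lt_add h1 hcnorm
      _ ≤ 2 * δ := by linarith
      _ ≤ 1 / (m + 1 : ℝ) := h2δ
  have hηint : ∫ y, η y = 1 := by
    rw [hηdef]
    simp only
    rw [MeasureTheory.integral_sub_right_eq_self N c]
    exact hNint
  -- the mollification of f agrees with the translate of G near x₀
  have hFG : ∀ x ∈ ball x₀ (r₀ / 2), (∫ y, η y * f (x - y)) = G (x - c) := by
    intro x hx
    rw [mem_ball, dist_eq_norm] at hx
    have step1 : (∫ y, η y * f (x - y)) = ∫ t, N t * f (x - c - t) := by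
      have h1 : (fun y => η y * f (x - y))
          = fun y => (fun t => N t * f (x - c - t)) (y - c) := by
        funext y
        simp only [hηdef]
        congr 2
        abel
      rw [h1, MeasureTheory.integral_sub_right_eq_self (fun t => N t * f (x - c - t)) c]
    have step2 : (∫ t, N t * f (x - c - t)) = ∫ t, N t * ft (x - c - t) := by
      congr 1
      funext t
      rcases eq_or_ne (N t) 0 with h | h
      · rw [h, zero_mul, zero_mul]
      · have ht : ‖t‖ < r := by
          have := Function.mem_support.2 h
          rw [hNsupp, mem_ball, dist_zero_right] at this
          exact this
        have hmem : x - c - t ∈ closedBall x₀ (2 * r₀) := by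
          rw [mem_closedBall, dist_eq_norm]
          have h1 : x - c - t - x₀ = ((x - x₀) - c) - t := by abel
          rw [h1]
          calc ‖((x - x₀) - c) - t‖ ≤ ‖(x - x₀) - c‖ + ‖t‖ := norm_sub_le _ _
            _ ≤ ‖x - x₀‖ + ‖c‖ + ‖t‖ := by linarith [norm_sub_le (x - x₀) c]
            _ ≤ 2 * r₀ := by linarith
        rw [hfteq _ hmem]
    rw [step1, step2, hGdef]
  have hFev : (fun x => ∫ y, η y * f (x - y)) =ᶠ[𝓝 x₀] fun x => G (x - c) := by
    filter_upwards [ball_mem_nhds x₀ (by positivity : (0:ℝ) < r₀ / 2)] with x hx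
    exact hFG x hx
  have hFgrad : HasGradientAt (fun x => ∫ y, η y * f (x - y)) w x₀ :=
    hGt.congr_of_eventuallyEq hFev
  refine ⟨η, w, hηc, hηnn, hηsupp, hηint, hFgrad, ?_⟩
  have hwp : ‖w - p₀‖ = 2 * σ * ‖xm - x₀‖ := by
    rw [hwdef, add_sub_cancel_left, norm_smul, Real.norm_eq_abs,
      abs_of_pos (by positivity : (0:ℝ) < 2 * σ)]
  rw [hwp]
  calc 2 * σ * ‖xm - x₀‖ ≤ 2 * σ * δ :=
        mul_le_mul_of_nonneg_left hlt.le (by positivity)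
    _ ≤ 2 * σ * (1 / (2 * (m + 1 : ℝ))) := mul_le_mul_of_nonneg_left hδm (by positivity)
    _ = σ / (m + 1 : ℝ) := by field_simp


set_option maxHeartbeats 1000000 in
/-- for a semiconcave function `f` and `p₀ ∈ D⁺f(x₀)`, there is a
sequence of mollifications `fᵐ = ηᵐ * f` with `fᵐ → f` uniformly on compact
subsets of `U` and `Dfᵐ(x₀) → p₀`. -/
theorem stmt4 {n : ℕ} {U : Set (EuclideanSpace ℝ (Fin n))} (hUopen : IsOpen U)
    {f : EuclideanSpace ℝ (Fin n) → ℝ} (hf : LocallySemiconcaveOn U f)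
    {x₀ p₀ : EuclideanSpace ℝ (Fin n)} (hx₀ : x₀ ∈ U) (hp₀ : SuperDiff f x₀ p₀) :
    ∃ η : ℕ → EuclideanSpace ℝ (Fin n) → ℝ,
      (∀ m y, 0 ≤ η m y) ∧
      (∀ m, Function.support (η m) ⊆ Metric.ball 0 (1 / (m + 1 : ℝ))) ∧
      (∀ m, ∫ y, η m y = 1) ∧
      (∀ C : Set (EuclideanSpace ℝ (Fin n)), C ⊆ U → IsCompact C →
        TendstoUniformlyOn (fun m x => ∫ y, η m y * f (x - y)) f atTop C) ∧
      (∀ m, DifferentiableAt ℝ (fun x => ∫ y, η m y * f (x - y)) x₀) ∧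
      Tendsto (fun m => gradient (fun x => ∫ y, η m y * f (x - y)) x₀) atTop (𝓝 p₀) := by
  classical
  obtain ⟨V, hx₀V, hVopen, hVU, hVconv, K, hK⟩ := hf x₀ hx₀
  have hfc : ContinuousOn f U := locallySemiconcave_continuousOn hUopen hf
  have hstarV := superdiff_global hVconv hK hx₀V hp₀
  obtain ⟨r₁, hr₁, hballV⟩ := Metric.isOpen_iff.1 hVopen x₀ hx₀V
  set r₀ := r₁ / 4 with hr₀def
  have hr₀ : 0 < r₀ := by positivity
  have hcbV : closedBall x₀ (3 * r₀) ⊆ V := by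
    intro z hz
    rw [mem_closedBall] at hz
    exact hballV (by rw [mem_ball]; rw [hr₀def] at hz; linarith)
  set σ := |K| / 2 + 1 with hσdef
  have hσ : 0 < σ := by positivity
  have hσK : K / 2 + 1 ≤ σ := by
    have := le_abs_self K
    rw [hσdef]; linarith
  -- cutoff
  set χ : ContDiffBump x₀ := ⟨2 * r₀, 3 * r₀, by positivity, by linarith⟩ with hχdef
  set ft : EuclideanSpace ℝ (Fin n) → ℝ := fun x => χ x * f x with hftdef
  have hfteq : ∀ x ∈ closedBall x₀ (2 * r₀), ft x = f x := by
    intro x hx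
    rw [hftdef]
    simp only
    rw [χ.one_of_mem_closedBall hx, one_mul]
  have hftc : Continuous ft := by
    rw [continuous_iff_continuousAt]
    intro z
    by_cases hz : z ∈ V
    · exact (χ.continuous.continuousAt).mul (hfc.continuousAt (hUopen.mem_nhds (hVU hz)))
    · have hz3 : z ∉ closedBall x₀ (3 * r₀) := fun h => hz (hcbV h)
      have hz4 : ∀ᶠ w in 𝓝 z, ft w = 0 := by
        filter_upwards [(isClosed_closedBall).isOpen_compl.mem_nhds hz3] with w hw
        have : χ w = 0 := by
          apply χ.zero_of_le_dist
          rw [Set.mem_compl_iff, mem_closedBall, not_le] at hw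
          exact hw.le
        rw [hftdef]; simp only [this, zero_mul]
      have hz4' : ft =ᶠ[𝓝 z] (fun _ => (0:ℝ)) := hz4
      exact continuousAt_const.congr hz4'.symm
  have hftcs : HasCompactSupport ft := χ.hasCompactSupport.mul_right
  have hstar : ∀ y ∈ closedBall x₀ (3 * r₀),
      f y - f x₀ - ⟪p₀, y - x₀⟫ ≤ K / 2 * ‖y - x₀‖ ^ 2 := fun y hy => hstarV y (hcbV hy)
  have key := fun m : ℕ =>
    key_lemma hr₀ hσK hσ hftc hftcs hfteq hstar m
  choose η v hηc hηnn hηsupp hηint hηgrad hηdist using key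
  refine ⟨η, hηnn, hηsupp, hηint, ?_, fun m => (hηgrad m).differentiableAt, ?_⟩
  · -- uniform convergence on compacts
    intro C hCU hCcpt
    obtain ⟨ε₁, hε₁, hthick⟩ := hCcpt.exists_cthickening_subset_open hUopen hCU
    have hK' : IsCompact (cthickening ε₁ C) := hCcpt.cthickening
    rw [Metric.tendstoUniformlyOn_iff]
    intro ε hε
    obtain ⟨δ₂, hδ₂, hucf⟩ := Metric.uniformContinuousOn_iff.1
      (hK'.uniformContinuousOn_of_continuous (hfc.mono hthick)) (ε / 2) (by positivity)
    have hev : ∀ᶠ m : ℕ in atTop, 1 / (m + 1 : ℝ) < min δ₂ ε₁ :=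
      tendsto_one_div_add_atTop_nhds_zero_nat.eventually_lt_const (lt_min hδ₂ hε₁)
    filter_upwards [hev] with m hm x hxC
    have hm1 : (0:ℝ) < (m + 1 : ℝ) := by positivity
    have hsδ₂ : 1 / (m + 1 : ℝ) < δ₂ := lt_of_lt_of_le hm (min_le_left _ _)
    have hsε₁ : 1 / (m + 1 : ℝ) < ε₁ := lt_of_lt_of_le hm (min_le_right _ _)
    have hmem : ∀ y : EuclideanSpace ℝ (Fin n), ‖y‖ ≤ 1 / (m + 1 : ℝ) →
        x - y ∈ cthickening ε₁ C := by
      intro y hy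
      apply mem_cthickening_of_dist_le (x - y) x ε₁ C hxC
      rw [dist_eq_norm]
      have : x - y - x = -y := by abel
      rw [this, norm_neg]
      linarith
    have hxK' : x ∈ cthickening ε₁ C := self_subset_cthickening C hxC
    have hηzero : ∀ y : EuclideanSpace ℝ (Fin n), y ∉ closedBall (0 : EuclideanSpace ℝ (Fin n))
        (1 / (m + 1 : ℝ)) → η m y = 0 := by
      intro y hy
      by_contra h3
      exact hy (ball_subset_closedBall ((hηsupp m) (Function.mem_support.2 h3)))
    have hηmI : Integrable (η m) :=
      (hηc m).integrable_of_hasCompactSupport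
        (HasCompactSupport.intro (isCompact_closedBall _ _) hηzero)
    have hintg : Integrable (fun y => η m y * f (x - y)) := by
      apply Continuous.integrable_of_hasCompactSupport
      · rw [continuous_iff_continuousAt]
        intro y
        by_cases hyU : x - y ∈ U
        · exact ((hηc m).continuousAt).mul
            ((hfc.continuousAt (hUopen.mem_nhds hyU)).comp
              ((continuous_const.sub continuous_id).continuousAt))
        · have h1 : y ∉ closedBall (0 : EuclideanSpace ℝ (Fin n)) (1 / (m + 1 : ℝ)) := by
            intro hy
            rw [mem_closedBall, dist_zero_right] at hy
            exact hyU (hthick (hmem y hy))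
          have h2 : ∀ᶠ z in 𝓝 y, η m z = 0 := by
            filter_upwards [(isClosed_closedBall).isOpen_compl.mem_nhds h1] with z hz
            exact hηzero z hz
          have h4 : (fun z => η m z * f (x - z)) =ᶠ[𝓝 y] fun _ => (0:ℝ) :=
            h2.mono fun z hz => by
              show η m z * f (x - z) = 0
              rw [hz, zero_mul]
          exact continuousAt_const.congr h4.symm
      · exact HasCompactSupport.intro (isCompact_closedBall _ _)
          (fun y hy => by rw [hηzero y hy, zero_mul])
    have hsplit : (∫ y, η m y * (f (x - y) - f x)) = (∫ y, η m y * f (x - y)) - f x := by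
      rw [show (fun y => η m y * (f (x - y) - f x))
          = fun y => η m y * f (x - y) - η m y * f x from funext fun y => by ring,
        integral_sub hintg (hηmI.mul_const _), integral_mul_const, hηint m, one_mul]
    have hdiffI : Integrable (fun y => η m y * (f (x - y) - f x)) := by
      have := hintg.sub (hηmI.mul_const (f x))
      simp only [mul_sub]
      exact this
    have hbound : |(∫ y, η m y * f (x - y)) - f x| ≤ ε / 2 := by
      rw [← hsplit]
      calc |∫ y, η m y * (f (x - y) - f x)| ≤ ∫ y, |η m y * (f (x - y) - f x)| := by
            simpa only [Real.norm_eq_abs] using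
              norm_integral_le_integral_norm (μ := volume) (fun y => η m y * (f (x - y) - f x))
        _ ≤ ∫ y, η m y * (ε / 2) := by
            apply integral_mono hdiffI.abs (hηmI.mul_const _)
            intro y
            show |η m y * (f (x - y) - f x)| ≤ η m y * (ε / 2)
            rcases eq_or_ne (η m y) 0 with h | h
            · simp [h]
            · have hy := (hηsupp m) (Function.mem_support.2 h)
              rw [mem_ball, dist_zero_right] at hy
              have hxyK : x - y ∈ cthickening ε₁ C := hmem y hy.le
              have hd : dist (x - y) x < δ₂ := by
                rw [dist_eq_norm]
                have : x - y - x = -y := by abel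
                rw [this, norm_neg]
                linarith
              have h5 := hucf (x - y) hxyK x hxK' hd
              rw [Real.dist_eq] at h5
              rw [abs_mul, abs_of_nonneg (hηnn m y)]
              exact mul_le_mul_of_nonneg_left h5.le (hηnn m y)
        _ = ε / 2 := by rw [integral_mul_const, hηint m, one_mul]
    rw [Real.dist_eq, abs_sub_comm]
    calc |(∫ y, η m y * f (x - y)) - f x| ≤ ε / 2 := hbound
      _ < ε := by linarith
  · -- convergence of gradients
    have h1 : ∀ m, gradient (fun x => ∫ y, η m y * f (x - y)) x₀ = v m :=
      fun m => (hηgrad m).gradient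
    simp only [h1]
    rw [← tendsto_sub_nhds_zero_iff]
    apply squeeze_zero_norm (fun m => hηdist m)
    have h2 : Tendsto (fun m : ℕ => σ * (1 / (m + 1 : ℝ))) atTop (𝓝 (σ * 0)) :=
      tendsto_one_div_add_atTop_nhds_zero_nat.const_mul σ
    rw [mul_zero] at h2
    apply h2.congr
    intro m
    rw [mul_one_div]
end

section
/- Let L(x,v) = ½ g_x(v,v) − ω_x(v) be a magnetic Lagrangian on a closed Riemannian manifold (M,g), where ω is a non-exact C² one-form. Then the Mañé critical value satisfies c[L] > 0. Moreover, if γ:[0,1]→M is a closed curve with C₁ := ∫_γ ω > 0 and C₂ := ½∫₀¹ g(γ̇,γ̇)dt > 0, then c[L] ≥ C₁²/(4C₂). -/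
open Filter Topology Manifold MeasureTheory intervalIntegral
open scoped Manifold

/-- The velocity of a curve `γ : ℝ → M` at time `t`. -/
noncomputable def curveDeriv {n : ℕ} {M : Type*} [TopologicalSpace M]
    [ChartedSpace (EuclideanSpace ℝ (Fin n)) M]
    [IsManifold (𝓡 n) ((⊤ : ℕ∞) : WithTop ℕ∞) M] (γ : ℝ → M) (t : ℝ) :
    TangentSpace (𝓡 n) (γ t) :=
  mfderiv 𝓘(ℝ, ℝ) (𝓡 n) γ t (1 : ℝ)

/-- for the magnetic Lagrangian `L(x,v) = ½ g_x(v,v) − ω_x(v)` with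
`ω` a non-exact `C²` one-form on a closed Riemannian manifold, the Mañé critical
value is strictly positive; moreover, for any closed curve `γ` with
`C₁ = ∫_γ ω > 0` and `C₂ = ½∫ g(γ̇,γ̇) > 0`, one has `c[L] ≥ C₁²/(4C₂)`. -/
theorem stmt6 {n : ℕ} {M : Type*} [TopologicalSpace M]
    [ChartedSpace (EuclideanSpace ℝ (Fin n)) M]
    [IsManifold (𝓡 n) ((⊤ : ℕ∞) : WithTop ℕ∞) M] [CompactSpace M] [Nonempty M]
    (g : M → EuclideanSpace ℝ (Fin n) →L[ℝ] EuclideanSpace ℝ (Fin n) →L[ℝ] ℝ)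
    (hgsym : ∀ x v w, g x v w = g x w v)
    (hgpos : ∀ x v, v ≠ 0 → 0 < g x v v)
    (ω : M → EuclideanSpace ℝ (Fin n) →L[ℝ] ℝ)
    (hω : ContMDiff (𝓡 n) 𝓘(ℝ, EuclideanSpace ℝ (Fin n) →L[ℝ] ℝ) 2 ω)
    -- `ω` is not exact
    (hnonexact : ¬ ∃ F : M → ℝ, MDifferentiable (𝓡 n) 𝓘(ℝ, ℝ) F ∧
      ∀ x, ω x = (mfderiv (𝓡 n) 𝓘(ℝ, ℝ) F x :
        EuclideanSpace ℝ (Fin n) →L[ℝ] ℝ))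
    -- `c` is the Mañé critical value: some `u` is dominated by `L + c`
    (c : ℝ) (u : M → ℝ)
    (hdom : ∀ T : ℝ, 0 < T → ∀ γ : ℝ → M, MDifferentiable 𝓘(ℝ, ℝ) (𝓡 n) γ →
      u (γ T) - u (γ 0) ≤ ∫ t in (0 : ℝ)..T,
        ((1 / 2) * g (γ t) (curveDeriv γ t) (curveDeriv γ t)
          - ω (γ t) (curveDeriv γ t) + c))
    -- a closed `C¹` curve with positive circulation and energy
    (γ : ℝ → M) (hγ : ContMDiff 𝓘(ℝ, ℝ) (𝓡 n) 1 γ) (hclosed : γ 0 = γ 1)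
    (C₁ C₂ : ℝ)
    (hC₁ : C₁ = ∫ t in (0 : ℝ)..1, ω (γ t) (curveDeriv γ t))
    (hC₂ : C₂ = (1 / 2) * ∫ t in (0 : ℝ)..1, g (γ t) (curveDeriv γ t) (curveDeriv γ t))
    (hC₁pos : 0 < C₁) (hC₂pos : 0 < C₂) :
    0 < c ∧ C₁ ^ 2 / (4 * C₂) ≤ c := by
  have hγmd : MDifferentiable 𝓘(ℝ, ℝ) (𝓡 n) γ := hγ.mdifferentiable one_ne_zero
  -- integrability of the two integrands
  have hIa : IntervalIntegrable
      (fun t => g (γ t) (curveDeriv γ t) (curveDeriv γ t)) volume 0 1 := by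
    by_contra h
    rw [intervalIntegral.integral_undef h] at hC₂
    norm_num at hC₂
    exact absurd hC₂ hC₂pos.ne'
  have hIb : IntervalIntegrable
      (fun t => ω (γ t) (curveDeriv γ t)) volume 0 1 := by
    by_contra h
    rw [intervalIntegral.integral_undef h] at hC₁
    exact absurd hC₁ hC₁pos.ne'
  -- main estimate for each speed s > 0
  have key : ∀ s : ℝ, 0 < s → s * C₁ - s ^ 2 * C₂ ≤ c := by
    intro s hs
    set δ : ℝ → M := fun t => γ (s * t) with hδ_def
    have hlin : ∀ t : ℝ, MDifferentiableAt 𝓘(ℝ, ℝ) 𝓘(ℝ, ℝ) (fun t : ℝ => s * t) t :=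
      fun t => ((differentiableAt_id.const_mul s)).mdifferentiableAt
    have hδmd : MDifferentiable 𝓘(ℝ, ℝ) (𝓡 n) δ := by
      have h : MDifferentiable 𝓘(ℝ, ℝ) (𝓡 n) (γ ∘ fun t : ℝ => s * t) :=
        MDifferentiable.comp hγmd (fun t => hlin t)
      exact h
    have hcd : ∀ t : ℝ, curveDeriv (n := n) δ t = s • curveDeriv (n := n) γ (s * t) := by
      intro t
      have hcomp := mfderiv_comp (I' := 𝓘(ℝ, ℝ)) t (hγmd (s * t)) (hlin t)
      have hval : mfderiv 𝓘(ℝ, ℝ) 𝓘(ℝ, ℝ) (fun t : ℝ => s * t) t (1 : ℝ) = s := by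
        have hd : HasDerivAt (fun x : ℝ => s * x) s t := by
          simpa using (hasDerivAt_id t).const_mul s
        rw [mfderiv_eq_fderiv, hd.hasFDerivAt.fderiv]
        exact one_smul ℝ s
      show mfderiv 𝓘(ℝ, ℝ) (𝓡 n) δ t (1 : ℝ) = s • mfderiv 𝓘(ℝ, ℝ) (𝓡 n) γ (s * t) (1 : ℝ)
      have : mfderiv 𝓘(ℝ, ℝ) (𝓡 n) δ t (1 : ℝ)
          = mfderiv 𝓘(ℝ, ℝ) (𝓡 n) γ (s * t)
            (mfderiv 𝓘(ℝ, ℝ) 𝓘(ℝ, ℝ) (fun t : ℝ => s * t) t (1 : ℝ)) := by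
        rw [show δ = γ ∘ (fun t : ℝ => s * t) from rfl, hcomp]
        rfl
      rw [this, hval]
      have := (mfderiv 𝓘(ℝ, ℝ) (𝓡 n) γ (s * t)).map_smul s (1 : ℝ)
      rw [← this]
      congr 1
      exact (mul_one s).symm
    have hdom' := hdom (1 / s) (by positivity) δ hδmd
    have hδ0 : δ 0 = γ 0 := by simp [hδ_def]
    have hδT : δ (1 / s) = γ 1 := by
      simp only [hδ_def]
      rw [mul_one_div, div_self hs.ne']
    rw [hδ0, hδT, hclosed, sub_self] at hdom'
    -- rewrite the integrand as G (s * t)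
    set G : ℝ → ℝ := fun τ => (1 / 2) * (s ^ 2 * g (γ τ) (curveDeriv (n := n) γ τ) (curveDeriv (n := n) γ τ))
      - s * ω (γ τ) (curveDeriv (n := n) γ τ) + c with hG_def
    have hfun : (fun t => (1 / 2) * g (δ t) (curveDeriv (n := n) δ t) (curveDeriv (n := n) δ t)
        - ω (δ t) (curveDeriv (n := n) δ t) + c) = fun t => G (s * t) := by
      funext t
      rw [hcd t]
      show (1 / 2) * g (γ (s * t)) (s • (curveDeriv (n := n) γ (s * t) : EuclideanSpace ℝ (Fin n))) (s • (curveDeriv (n := n) γ (s * t) : EuclideanSpace ℝ (Fin n)))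
        - ω (γ (s * t)) (s • (curveDeriv (n := n) γ (s * t) : EuclideanSpace ℝ (Fin n))) + c = G (s * t)
      erw [(ω (γ (s * t))).map_smul s, (g (γ (s * t))).map_smul s, ContinuousLinearMap.smul_apply,
        (g (γ (s * t)) _).map_smul s]
      simp only [hG_def, _root_.map_smul, ContinuousLinearMap.smul_apply, smul_eq_mul]
      ring
    rw [hfun, intervalIntegral.integral_comp_mul_left G hs.ne'] at hdom'
    rw [mul_zero, mul_one_div, div_self hs.ne'] at hdom'
    -- compute ∫ G on [0,1]
    have hIG1 : IntervalIntegrable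
        (fun t => (1 / 2) * (s ^ 2 * g (γ t) (curveDeriv (n := n) γ t) (curveDeriv (n := n) γ t))
          - s * ω (γ t) (curveDeriv (n := n) γ t)) volume 0 1 :=
      ((hIa.const_mul (s ^ 2)).const_mul (1 / 2)).sub (hIb.const_mul s)
    have hG : ∫ τ in (0 : ℝ)..1, G τ = s ^ 2 * C₂ - s * C₁ + c := by
      rw [hG_def]
      rw [intervalIntegral.integral_add hIG1 intervalIntegrable_const,
        intervalIntegral.integral_sub
          ((hIa.const_mul (s ^ 2)).const_mul (1 / 2)) (hIb.const_mul s),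
        intervalIntegral.integral_const_mul, intervalIntegral.integral_const_mul,
        intervalIntegral.integral_const_mul, intervalIntegral.integral_const]
      rw [← hC₁]
      rw [hC₂]
      simp only [smul_eq_mul, sub_zero, one_mul]
      ring
    rw [hG, smul_eq_mul] at hdom'
    have h0 : 0 ≤ s ^ 2 * C₂ - s * C₁ + c := by
      nlinarith [mul_pos (inv_pos.mpr hs) hs]
    linarith
  have hkey := key (C₁ / (2 * C₂)) (by positivity)
  have heq : (C₁ / (2 * C₂)) * C₁ - (C₁ / (2 * C₂)) ^ 2 * C₂ = C₁ ^ 2 / (4 * C₂) := by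
    field_simp
    ring
  rw [heq] at hkey
  exact ⟨lt_of_lt_of_le (by positivity) hkey, hkey⟩
end

section
/- Let (M,g) be a connected closed orientable surface with Euler characteristic χ(M) ≠ 0, L(x,v) = ½g_x(v,v) − ω_x(v) − V(x) with max V = 0, and u a weak KAM solution of ½‖Du + ω‖²_{g*} + V = c[L]. If u has no singular points (i.e. u ∈ C¹(M)), then c[L] = 0. In particular, if V ≡ 0 and ω is non-exact, then Sing(u) ≠ ∅. -/
open Filter Topology Manifold MeasureTheory
open scoped Manifold

/-- on a connected closed orientable surface with `χ(M) ≠ 0`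
(encoded, via Poincaré–Hopf, as the nonexistence of a continuous nowhere-vanishing
vector field), if a weak KAM solution `u` of `½‖Du + ω‖² + V = c[L]` (with
`max V = 0`) has empty singular set, i.e. `u ∈ C¹(M)`, then `c[L] = 0`.
In particular (stated contrapositively, since `Sing(u) = ∅` is assumed), if
`V ≡ 0` and `ω` is non-exact then we reach a contradiction, i.e. `Sing(u) ≠ ∅`. -/
theorem stmt9 {M : Type*} [TopologicalSpace M] [ConnectedSpace M]
    [ChartedSpace (EuclideanSpace ℝ (Fin 2)) M]
    [IsManifold (𝓡 2) ((⊤ : ℕ∞) : WithTop ℕ∞) M] [CompactSpace M] [Nonempty M]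
    -- the Riemannian metric
    (g : M → EuclideanSpace ℝ (Fin 2) →L[ℝ] EuclideanSpace ℝ (Fin 2) →L[ℝ] ℝ)
    (hgsym : ∀ x v w, g x v w = g x w v)
    (hgpos : ∀ x v, v ≠ 0 → 0 < g x v v)
    -- `χ(M) ≠ 0`, encoded by Poincaré–Hopf: no continuous nowhere-vanishing vector field
    (hEuler : ¬ ∃ Y : (x : M) → TangentSpace (𝓡 2) x,
      Continuous (fun x => (⟨x, Y x⟩ : TangentBundle (𝓡 2) M)) ∧ ∀ x, Y x ≠ 0)
    -- the one-form `ω`, the potential `V` with `max V = 0`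
    (ω : M → EuclideanSpace ℝ (Fin 2) →L[ℝ] ℝ) (hωcont : Continuous ω)
    (V : M → ℝ) (hVcont : Continuous V) (hVle : ∀ x, V x ≤ 0) (hVmax : ∃ x, V x = 0)
    -- the vector field `X = ω♯`, `g`-dual to `ω`
    (X : (x : M) → TangentSpace (𝓡 2) x)
    (hX : ∀ x v, g x (X x) v = ω x v)
    (hXcont : Continuous fun x => (⟨x, X x⟩ : TangentBundle (𝓡 2) M))
    -- `u` is a weak KAM solution: dominated by `L + c` …
    (c : ℝ) (u : M → ℝ)
    (hdom : ∀ T : ℝ, 0 < T → ∀ γ : ℝ → M, MDifferentiable 𝓘(ℝ, ℝ) (𝓡 2) γ →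
      u (γ T) - u (γ 0) ≤ ∫ t in (0 : ℝ)..T,
        ((1 / 2) * g (γ t) (curveDeriv γ t) (curveDeriv γ t)
          - ω (γ t) (curveDeriv γ t) - V (γ t) + c))
    -- … with `Sing(u) = ∅`, i.e. `u ∈ C¹(M)`: `u` is differentiable everywhere,
    -- with continuous gradient field `Gu = ∇u`
    (hdiff : ∀ x, MDifferentiableAt (𝓡 2) 𝓘(ℝ, ℝ) u x)
    (Gu : (x : M) → TangentSpace (𝓡 2) x)
    (hGu : ∀ x v, g x (Gu x) v = mfderiv (𝓡 2) 𝓘(ℝ, ℝ) u x v)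
    (hGucont : Continuous fun x => (⟨x, Gu x⟩ : TangentBundle (𝓡 2) M))
    -- … satisfying the Hamilton–Jacobi equation `½⟨∇u + X, ∇u + X⟩ + V = c`
    (hHJ : ∀ x, (1 / 2) * g x (Gu x + X x) (Gu x + X x) + V x = c) :
    c = 0 ∧
      ((∀ x, V x = 0) →
        (¬ ∃ F : M → ℝ, MDifferentiable (𝓡 2) 𝓘(ℝ, ℝ) F ∧
          ∀ x, ω x = (mfderiv (𝓡 2) 𝓘(ℝ, ℝ) F x :
            EuclideanSpace ℝ (Fin 2) →L[ℝ] ℝ)) → False) := by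
  classical
  -- positivity facts about g
  have hg0 : ∀ (x : M) (v : EuclideanSpace ℝ (Fin 2)), 0 ≤ g x v v := by
    intro x v
    by_cases hv : v = 0
    · simp [hv]
    · exact le_of_lt (hgpos x v hv)
  have hgzero : ∀ (x : M) (v : EuclideanSpace ℝ (Fin 2)), g x v v = 0 → v = 0 := by
    intro x v hgv
    by_contra hv
    exact absurd hgv (ne_of_gt (hgpos x v hv))
  -- c ≥ 0
  obtain ⟨x0, hx0⟩ := hVmax
  have hc0 : 0 ≤ c := by
    have := hHJ x0
    have := hg0 x0 (Gu x0 + X x0)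
    linarith
  -- c ≤ 0 via Poincaré–Hopf
  have hcle : c ≤ 0 := by
    by_contra hc
    push_neg at hc
    refine hEuler ⟨fun x => Gu x + X x, ?_, ?_⟩
    · -- continuity of the sum of two continuous sections
      rw [continuous_iff_continuousAt]
      intro x₀
      rw [FiberBundle.continuousAt_totalSpace]
      refine ⟨continuousAt_id, ?_⟩
      set e := trivializationAt (EuclideanSpace ℝ (Fin 2)) (TangentSpace (𝓡 2)) x₀ with he
      have hmem : x₀ ∈ e.baseSet :=
        FiberBundle.mem_baseSet_trivializationAt (EuclideanSpace ℝ (Fin 2)) (TangentSpace (𝓡 2)) x₀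
      have h1 : ContinuousAt (fun x => (e (⟨x, Gu x⟩ : TangentBundle (𝓡 2) M)).2) x₀ :=
        ((FiberBundle.continuousAt_totalSpace _ _).1 hGucont.continuousAt).2
      have h2 : ContinuousAt (fun x => (e (⟨x, X x⟩ : TangentBundle (𝓡 2) M)).2) x₀ :=
        ((FiberBundle.continuousAt_totalSpace _ _).1 hXcont.continuousAt).2
      have heq : (fun x => (e (⟨x, Gu x⟩ : TangentBundle (𝓡 2) M)).2
            + (e (⟨x, X x⟩ : TangentBundle (𝓡 2) M)).2)
          =ᶠ[𝓝 x₀] fun x => (e (⟨x, Gu x + X x⟩ : TangentBundle (𝓡 2) M)).2 := by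
        filter_upwards [e.open_baseSet.mem_nhds hmem] with x hx
        exact ((e.linear ℝ hx).map_add (Gu x) (X x)).symm
      exact (h1.add h2).congr heq
    · intro x hx
      have hHJx := hHJ x
      have hx' : Gu x + X x = 0 := hx
      rw [hx'] at hHJx
      have : g x (0 : EuclideanSpace ℝ (Fin 2)) 0 = 0 := by simp
      have hVx := hVle x
      erw [this] at hHJx
      linarith
  have hc : c = 0 := le_antisymm hcle hc0
  refine ⟨hc, ?_⟩
  intro hV hnex
  apply hnex
  refine ⟨fun x => -u x, fun x => (hdiff x).neg, ?_⟩
  intro x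
  -- from HJ: Gu x + X x = 0
  have hHJx := hHJ x
  rw [hV x, hc] at hHJx
  have hz : Gu x + X x = 0 := hgzero x _ (by linarith)
  have hXx : X x = -Gu x := by
    rw [eq_neg_iff_add_eq_zero, add_comm]
    exact hz
  have h2 : (fun y => -u y) = -u := rfl
  rw [h2, mfderiv_neg]
  ext v
  show (ω x) v = -((mfderiv 𝓘(ℝ, EuclideanSpace ℝ (Fin 2)) 𝓘(ℝ, ℝ) u x) v)
  rw [← hGu x v, ← hX x v, hXx]
  exact congrArg (fun f => f v) ((g x).map_neg (Gu x))
end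

section
/- Let f : W → ℝ be continuous and positive on an open set W, and let x : [0,T] → W be a Lipschitz solution of ẋ(t) = F(x(t)) a.e. with x(0) = x₀, where F is a bounded measurable vector field. Define s(t) = ∫₀ᵗ f(x(τ)) dτ, which is strictly increasing with inverse t(s), and set y(s) := x(t(s)). Then y is Lipschitz and satisfies ẏ(s) = F(y(s))/f(y(s)) a.e. with y(0) = x₀. Conversely, any solution of the latter equation reparameterizes to a solution of the former. -/
open Filter Topology MeasureTheory
open scoped NNReal ENNReal

/-- Auxiliary inverse-of-primitive lemma. -/
lemma aux_reparam (g : ℝ → ℝ) (hg : Continuous g) (c M : ℝ≥0) (hc : 0 < c)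
    (hcg : ∀ u, (c : ℝ) ≤ g u) (hgM : ∀ u, g u ≤ M) :
    ∃ φ : ℝ → ℝ, StrictMono φ ∧ φ 0 = 0 ∧
      StrictMono (fun u => ∫ τ in (0:ℝ)..u, g τ) ∧
      (∀ u, φ (∫ τ in (0:ℝ)..u, g τ) = u) ∧
      (∀ v, HasDerivAt φ (g (φ v))⁻¹ v) ∧
      LipschitzWith c⁻¹ φ ∧
      (∀ N : Set ℝ, volume N = 0 → volume (φ ⁻¹' N) = 0) := by
  set G : ℝ → ℝ := fun u => ∫ τ in (0:ℝ)..u, g τ with hG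
  have hgpos : ∀ u, 0 < g u := fun u => lt_of_lt_of_le (by exact_mod_cast hc) (hcg u)
  have hGd : ∀ u, HasDerivAt G (g u) u := fun u =>
    intervalIntegral.integral_hasDerivAt_right (hg.intervalIntegrable _ _)
      (hg.stronglyMeasurableAtFilter _ _) hg.continuousAt
  have hGmono : StrictMono G := by
    apply strictMono_of_deriv_pos
    intro u
    rw [(hGd u).deriv]
    exact hgpos u
  have hGcont : Continuous G := by
    rw [continuous_iff_continuousAt]; exact fun u => (hGd u).continuousAt
  have hlow : ∀ u : ℝ, 0 ≤ u → (c : ℝ) * u ≤ G u := by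
    intro u hu
    have := intervalIntegral.integral_mono_on (μ := volume) hu
      (intervalIntegrable_const (c := (c:ℝ))) (hg.intervalIntegrable _ _)
      (fun x _ => hcg x)
    simpa [mul_comm] using this
  have hhigh : ∀ u : ℝ, u ≤ 0 → G u ≤ (c : ℝ) * u := by
    intro u hu
    have := intervalIntegral.integral_mono_on (μ := volume) hu
      (intervalIntegrable_const (c := (c:ℝ))) (hg.intervalIntegrable _ _)
      (fun x _ => hcg x)
    have h0 : G u = -∫ τ in u..(0:ℝ), g τ := intervalIntegral.integral_symm u 0
    rw [h0]
    simp only [intervalIntegral.integral_const, smul_eq_mul] at this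
    nlinarith
  have hsurj : Function.Surjective G := by
    apply hGcont.surjective
    · apply tendsto_atTop_mono' _ _ ((tendsto_const_mul_atTop_of_pos
        (show (0:ℝ) < c by exact_mod_cast hc)).2 tendsto_id)
      filter_upwards [eventually_ge_atTop (0:ℝ)] with u hu using hlow u hu
    · apply tendsto_atBot_mono' _ _ ((tendsto_const_mul_atBot_of_pos
        (show (0:ℝ) < c by exact_mod_cast hc)).2 tendsto_id)
      filter_upwards [eventually_le_atBot (0:ℝ)] with u hu using hhigh u hu
  set e := StrictMono.orderIsoOfSurjective G hGmono hsurj with he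
  set φ : ℝ → ℝ := fun v => e.symm v with hφ
  have hleft : ∀ u, φ (G u) = u := fun u =>
    StrictMono.orderIsoOfSurjective_symm_apply_self G hGmono hsurj u
  have hright : ∀ v, G (φ v) = v := fun v =>
    StrictMono.orderIsoOfSurjective_self_symm_apply G hGmono hsurj v
  have hφmono : StrictMono φ := fun a b hab => e.symm.strictMono hab
  have hφcont : Continuous φ := e.symm.continuous
  have hφ0 : φ 0 = 0 := by
    have hG0 : G 0 = 0 := intervalIntegral.integral_same
    have := hleft 0
    rwa [hG0] at this
  have hφd : ∀ v, HasDerivAt φ (g (φ v))⁻¹ v := fun v =>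
    HasDerivAt.of_local_left_inverse hφcont.continuousAt (hGd (φ v))
      (ne_of_gt (hgpos _)) (Filter.Eventually.of_forall hright)
  have hφlip : LipschitzWith c⁻¹ φ := by
    rw [← lipschitzOnWith_univ]
    apply Convex.lipschitzOnWith_of_nnnorm_hasDerivWithin_le (f' := fun v => (g (φ v))⁻¹)
      convex_univ (fun v _ => (hφd v).hasDerivWithinAt)
    intro v _
    rw [← NNReal.coe_le_coe, coe_nnnorm, Real.norm_eq_abs,
      abs_of_pos (inv_pos.2 (hgpos _)), NNReal.coe_inv]
    exact inv_anti₀ (by exact_mod_cast hc) (hcg _)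
  refine ⟨φ, hφmono, hφ0, hGmono, hleft, hφd, hφlip, ?_⟩
  intro N hN
  have himg : φ ⁻¹' N = G '' N := by
    ext v
    constructor
    · intro hv; exact ⟨φ v, hv, hright v⟩
    · rintro ⟨u, hu, rfl⟩; rwa [Set.mem_preimage, hleft]
  have hGlip : LipschitzWith M G := by
    rw [← lipschitzOnWith_univ]
    apply Convex.lipschitzOnWith_of_nnnorm_hasDerivWithin_le (f' := fun u => g u)
      convex_univ (fun u _ => (hGd u).hasDerivWithinAt)
    intro u _
    rw [← NNReal.coe_le_coe, coe_nnnorm, Real.norm_eq_abs, abs_of_pos (hgpos _)]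
    exact hgM u
  have h1 := hGlip.hausdorffMeasure_image_le zero_le_one N
  rw [MeasureTheory.hausdorffMeasure_real] at h1
  rw [himg]
  exact le_antisymm (by simpa [hN] using h1) zero_le

/-- Clamping projection onto `[0,T]`. -/
lemma proj_spec (T : ℝ) (hT : 0 ≤ T) :
    ∃ p : ℝ → ℝ, Continuous p ∧ (∀ u, p u ∈ Set.Icc 0 T) ∧
      (∀ u ∈ Set.Icc 0 T, p u = u) := by
  refine ⟨fun u => max 0 (min u T), by fun_prop,
    fun u => ⟨le_max_left _ _, max_le hT (min_le_right _ _)⟩, ?_⟩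
  intro u hu
  show max 0 (min u T) = u
  rw [min_eq_left hu.2, max_eq_right hu.1]

/-- time-reparameterization lemma: a Lipschitz solution of
`ẋ = F(x)` reparameterizes, via `s(t) = ∫₀ᵗ f(x(τ))dτ`, to a solution of
`ẏ = F(y)/f(y)`, and conversely. -/
theorem stmt12 {n : ℕ} {W : Set (EuclideanSpace ℝ (Fin n))} (hWopen : IsOpen W)
    (f : EuclideanSpace ℝ (Fin n) → ℝ) (hfcont : ContinuousOn f W)
    (hfpos : ∀ y ∈ W, 0 < f y)
    (F : EuclideanSpace ℝ (Fin n) → EuclideanSpace ℝ (Fin n))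
    (hFmeas : Measurable F) (hFbdd : ∃ C, ∀ y, ‖F y‖ ≤ C)
    {T : ℝ} (hT : 0 < T) (x : ℝ → EuclideanSpace ℝ (Fin n))
    (x₀ : EuclideanSpace ℝ (Fin n)) (hx0 : x 0 = x₀)
    (hxlip : ∃ K, LipschitzOnWith K x (Set.Icc 0 T))
    (hxW : ∀ t ∈ Set.Icc (0 : ℝ) T, x t ∈ W)
    (hxode : ∀ᵐ t, t ∈ Set.Icc (0 : ℝ) T → HasDerivAt x (F (x t)) t)
    (s : ℝ → ℝ) (hs : ∀ t, s t = ∫ τ in (0 : ℝ)..t, f (x τ)) :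
    -- `s` is strictly increasing on `[0,T]`
    StrictMonoOn s (Set.Icc 0 T) ∧
    -- `y = x ∘ t(·)` is a Lipschitz solution of `ẏ = F(y)/f(y)` with `y(0) = x₀`
    (∃ τ : ℝ → ℝ, (∀ t ∈ Set.Icc (0 : ℝ) T, τ (s t) = t) ∧
      (∃ K, LipschitzOnWith K (x ∘ τ) (Set.Icc 0 (s T))) ∧
      (x ∘ τ) 0 = x₀ ∧
      (∀ᵐ σ, σ ∈ Set.Icc 0 (s T) →
        HasDerivAt (x ∘ τ) ((f ((x ∘ τ) σ))⁻¹ • F ((x ∘ τ) σ)) σ)) ∧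
    -- conversely: any Lipschitz solution of `ẏ = F(y)/f(y)` reparameterizes to a
    -- solution of `ẋ = F(x)`
    (∀ S : ℝ, 0 < S → ∀ y : ℝ → EuclideanSpace ℝ (Fin n),
      (∃ K, LipschitzOnWith K y (Set.Icc 0 S)) → y 0 = x₀ →
      (∀ σ ∈ Set.Icc (0 : ℝ) S, y σ ∈ W) →
      (∀ᵐ σ, σ ∈ Set.Icc (0 : ℝ) S →
        HasDerivAt y ((f (y σ))⁻¹ • F (y σ)) σ) →
      ∃ (T' : ℝ) (ρ : ℝ → ℝ), 0 ≤ T' ∧ ρ 0 = 0 ∧ ρ T' = S ∧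
        StrictMonoOn ρ (Set.Icc 0 T') ∧
        (∀ t ∈ Set.Icc (0 : ℝ) T', ρ t ∈ Set.Icc (0 : ℝ) S) ∧
        (y ∘ ρ) 0 = x₀ ∧
        (∀ᵐ t, t ∈ Set.Icc (0 : ℝ) T' →
          HasDerivAt (y ∘ ρ) (F ((y ∘ ρ) t)) t)) := by
  obtain ⟨K, hK⟩ := hxlip
  have hxcont : ContinuousOn x (Set.Icc 0 T) := hK.continuousOn
  obtain ⟨p, hpcont, hpmem, hpid⟩ := proj_spec T hT.le
  have hfxcont : ContinuousOn (f ∘ x) (Set.Icc 0 T) :=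
    hfcont.comp hxcont (fun t ht => hxW t ht)
  have hne : (Set.Icc (0:ℝ) T).Nonempty := ⟨0, Set.left_mem_Icc.2 hT.le⟩
  obtain ⟨t₀, ht₀, hmin⟩ := isCompact_Icc.exists_isMinOn hne hfxcont
  obtain ⟨t₁, ht₁, hmax⟩ := isCompact_Icc.exists_isMaxOn hne hfxcont
  have hfx0pos : 0 < f (x t₀) := hfpos _ (hxW _ ht₀)
  have hfx1pos : 0 < f (x t₁) := hfpos _ (hxW _ ht₁)
  set g : ℝ → ℝ := fun u => f (x (p u)) with hgdef
  have hgcont : Continuous g := by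
    have hxp : Continuous (fun u => x (p u)) :=
      hxcont.comp_continuous hpcont hpmem
    exact hfcont.comp_continuous hxp (fun u => hxW _ (hpmem u))
  set c : ℝ≥0 := (f (x t₀)).toNNReal with hcdef
  set M : ℝ≥0 := (f (x t₁)).toNNReal with hMdef
  have hc : 0 < c := Real.toNNReal_pos.2 hfx0pos
  have hcc : (c : ℝ) = f (x t₀) := Real.coe_toNNReal _ hfx0pos.le
  have hMM : (M : ℝ) = f (x t₁) := Real.coe_toNNReal _ hfx1pos.le
  have hcg : ∀ u, (c : ℝ) ≤ g u := fun u => by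
    rw [hcc]; exact hmin (hpmem u)
  have hgM : ∀ u, g u ≤ M := fun u => by
    rw [hMM]; exact hmax (hpmem u)
  obtain ⟨φ, hφmono, hφ0, hGmono, hleft, hφd, hφlip, hφnull⟩ :=
    aux_reparam g hgcont c M hc hcg hgM
  have hseq : ∀ t ∈ Set.Icc (0:ℝ) T, s t = ∫ τ in (0:ℝ)..t, g τ := by
    intro t ht
    rw [hs]
    apply intervalIntegral.integral_congr
    intro τ hτ
    rw [Set.uIcc_of_le ht.1] at hτ
    have hmem : τ ∈ Set.Icc (0:ℝ) T := ⟨hτ.1, hτ.2.trans ht.2⟩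
    show f (x τ) = f (x (p τ))
    rw [hpid τ hmem]
  have hsmono : StrictMonoOn s (Set.Icc 0 T) := by
    intro a ha b hb hab
    rw [hseq a ha, hseq b hb]
    exact hGmono hab
  have hτs : ∀ t ∈ Set.Icc (0:ℝ) T, φ (s t) = t := by
    intro t ht
    rw [hseq t ht]
    exact hleft t
  have hφT : φ (s T) = T := hτs T (Set.right_mem_Icc.2 hT.le)
  have hmapsτ : ∀ σ ∈ Set.Icc (0:ℝ) (s T), φ σ ∈ Set.Icc (0:ℝ) T := by
    intro σ hσ
    constructor
    · have := hφmono.monotone hσ.1; rwa [hφ0] at this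
    · have := hφmono.monotone hσ.2; rwa [hφT] at this
  refine ⟨hsmono, ⟨φ, hτs, ⟨K * c⁻¹,
      hK.comp hφlip.lipschitzOnWith (fun σ hσ => hmapsτ σ hσ)⟩, ?_, ?_⟩, ?_⟩
  · show x (φ 0) = x₀
    rw [hφ0, hx0]
  · -- the reparameterized ODE for `x ∘ φ`
    set N : Set ℝ := {t | ¬ (t ∈ Set.Icc (0:ℝ) T → HasDerivAt x (F (x t)) t)} with hNdef
    have hN : volume N = 0 := ae_iff.1 hxode
    have hB : volume (φ ⁻¹' N) = 0 := hφnull N hN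
    filter_upwards [measure_eq_zero_iff_ae_notMem.1 hB] with σ hσB hσmem
    simp only [Set.mem_preimage, hNdef, Set.mem_setOf_eq, not_not] at hσB
    have hτσ := hmapsτ σ hσmem
    have hxd : HasDerivAt x (F (x (φ σ))) (φ σ) := hσB hτσ
    have hgφ : g (φ σ) = f (x (φ σ)) := by
      show f (x (p (φ σ))) = f (x (φ σ)); rw [hpid _ hτσ]
    have hchain := hxd.scomp (x := σ) (hφd σ)
    rw [hgφ] at hchain
    simpa [Function.comp] using hchain
  · -- converse direction
    intro S hS y hylip hy0 hyW hyode
    obtain ⟨Ky, hKy⟩ := hylip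
    have hycont : ContinuousOn y (Set.Icc 0 S) := hKy.continuousOn
    obtain ⟨q, hqcont, hqmem, hqid⟩ := proj_spec S hS.le
    have hfycont : ContinuousOn (f ∘ y) (Set.Icc 0 S) :=
      hfcont.comp hycont (fun σ hσ => hyW σ hσ)
    have hne' : (Set.Icc (0:ℝ) S).Nonempty := ⟨0, Set.left_mem_Icc.2 hS.le⟩
    obtain ⟨σ₀, hσ₀, hmin'⟩ := isCompact_Icc.exists_isMinOn hne' hfycont
    obtain ⟨σ₁, hσ₁, hmax'⟩ := isCompact_Icc.exists_isMaxOn hne' hfycont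
    have hfy0pos : 0 < f (y σ₀) := hfpos _ (hyW _ hσ₀)
    have hfy1pos : 0 < f (y σ₁) := hfpos _ (hyW _ hσ₁)
    have hfyqpos : ∀ u, 0 < f (y (q u)) := fun u => hfpos _ (hyW _ (hqmem u))
    set h : ℝ → ℝ := fun u => (f (y (q u)))⁻¹ with hhdef
    have hhcont : Continuous h := by
      have hyq : Continuous (fun u => y (q u)) :=
        hycont.comp_continuous hqcont hqmem
      exact (hfcont.comp_continuous hyq (fun u => hyW _ (hqmem u))).inv₀
        (fun u => (hfyqpos u).ne')
    set c' : ℝ≥0 := (f (y σ₁))⁻¹.toNNReal with hc'def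
    set M' : ℝ≥0 := (f (y σ₀))⁻¹.toNNReal with hM'def
    have hc' : 0 < c' := Real.toNNReal_pos.2 (inv_pos.2 hfy1pos)
    have hcc' : (c' : ℝ) = (f (y σ₁))⁻¹ := Real.coe_toNNReal _ (inv_pos.2 hfy1pos).le
    have hMM' : (M' : ℝ) = (f (y σ₀))⁻¹ := Real.coe_toNNReal _ (inv_pos.2 hfy0pos).le
    have hch : ∀ u, (c' : ℝ) ≤ h u := fun u => by
      rw [hcc']; exact inv_anti₀ (hfyqpos u) (hmax' (hqmem u))
    have hhM : ∀ u, h u ≤ M' := fun u => by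
      rw [hMM']; exact inv_anti₀ hfy0pos (hmin' (hqmem u))
    obtain ⟨ρ, hρmono, hρ0, hHmono, hleft', hρd, hρlip, hρnull⟩ :=
      aux_reparam h hhcont c' M' hc' hch hhM
    set T' : ℝ := ∫ τ in (0:ℝ)..S, h τ with hT'def
    have hH0 : (∫ τ in (0:ℝ)..(0:ℝ), h τ) = 0 := intervalIntegral.integral_same
    have hT'nonneg : 0 ≤ T' := by
      have := hHmono.monotone hS.le
      simpa [hH0] using this
    have hρT' : ρ T' = S := hleft' S
    have hmapsρ : ∀ t ∈ Set.Icc (0:ℝ) T', ρ t ∈ Set.Icc (0:ℝ) S := by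
      intro t ht
      constructor
      · have := hρmono.monotone ht.1; rwa [hρ0] at this
      · have := hρmono.monotone ht.2; rwa [hρT'] at this
    refine ⟨T', ρ, hT'nonneg, hρ0, hρT', hρmono.strictMonoOn _, hmapsρ, ?_, ?_⟩
    · show y (ρ 0) = x₀
      rw [hρ0, hy0]
    · set N' : Set ℝ := {σ | ¬ (σ ∈ Set.Icc (0:ℝ) S →
        HasDerivAt y ((f (y σ))⁻¹ • F (y σ)) σ)} with hN'def
      have hN' : volume N' = 0 := ae_iff.1 hyode
      have hB' : volume (ρ ⁻¹' N') = 0 := hρnull N' hN'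
      filter_upwards [measure_eq_zero_iff_ae_notMem.1 hB'] with t htB htmem
      simp only [Set.mem_preimage, hN'def, Set.mem_setOf_eq, not_not] at htB
      have hρt := hmapsρ t htmem
      have hyd : HasDerivAt y ((f (y (ρ t)))⁻¹ • F (y (ρ t))) (ρ t) := htB hρt
      have hhρ : h (ρ t) = (f (y (ρ t)))⁻¹ := by
        show (f (y (q (ρ t))))⁻¹ = (f (y (ρ t)))⁻¹; rw [hqid _ hρt]
      have hchain := hyd.scomp (x := t) (hρd t)
      rw [hhρ, inv_inv] at hchain
      have hfne : f (y (ρ t)) ≠ 0 := (hfpos _ (hyW _ hρt)).ne'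
      rw [smul_smul, mul_inv_cancel₀ hfne, one_smul] at hchain
      simpa [Function.comp] using hchain
end
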